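/- For every p in (0,1), (1-p)(2-p)Γ((1-p)/2) ≥ 2^{(3-p)/2}. -/

import Mathlib

/-!
With `x = (1 - p) / 2 ∈ (0, 1/2)` the claim reads `2 ^ x ≤ (1 + 2x) Γ(1 + x)`.
Log-convexity of `Γ` between `1 + x` and `2 + x`, with weights `x` and `1 - x`, gives
`1 = Γ(2) ≤ (1 + x) ^ (1 - x) Γ(1 + x)`, and weighted AM-GM gives
`2 ^ x (1 + x) ^ (1 - x) ≤ 2x + (1 - x)(1 + x) ≤ 1 + 2x`.
-/

open Real

theorem one_le_rpow_mul_Gamma_one_add {x : ℝ} (hx₀ : 0 < x) (hx₁ : x < 1) :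
    1 ≤ (1 + x) ^ (1 - x) * Gamma (1 + x) := by
  have hconv := Gamma_mul_add_mul_le_rpow_Gamma_mul_rpow_Gamma
    (s := 1 + x) (t := 2 + x) (by linarith) (by linarith) hx₀ (sub_pos.2 hx₁) (by ring)
  have hGamma : Gamma (2 + x) = (1 + x) * Gamma (1 + x) := by
    rw [show 2 + x = (1 + x) + 1 by ring, Gamma_add_one (by linarith)]
  have hΓpos : 0 < Gamma (1 + x) := Gamma_pos_of_pos (by linarith)
  calc (1 : ℝ) = Gamma (x * (1 + x) + (1 - x) * (2 + x)) := by ring_nf; exact Gamma_two.symm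
    _ ≤ Gamma (1 + x) ^ x * Gamma (2 + x) ^ (1 - x) := hconv
    _ = (1 + x) ^ (1 - x) * Gamma (1 + x) := by
      rw [hGamma, mul_rpow (by linarith) hΓpos.le, ← mul_assoc, mul_comm _ ((1 + x) ^ _),
        mul_assoc, ← rpow_add hΓpos, add_sub_cancel, rpow_one]

theorem two_rpow_mul_one_add_rpow_le {x : ℝ} (hx₀ : 0 ≤ x) (hx₁ : x ≤ 1) :
    (2 : ℝ) ^ x * (1 + x) ^ (1 - x) ≤ 1 + 2 * x := by
  have hamgm := geom_mean_le_arith_mean2_weighted hx₀ (sub_nonneg.2 hx₁) zero_le_two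
    (by linarith : (0 : ℝ) ≤ 1 + x) (by ring)
  nlinarith [sq_nonneg x]

theorem two_rpow_le_mul_Gamma_one_add {x : ℝ} (hx₀ : 0 < x) (hx₁ : x < 1) :
    (2 : ℝ) ^ x ≤ (1 + 2 * x) * Gamma (1 + x) := by
  have hpos : 0 < (1 + x) ^ (1 - x) := rpow_pos_of_pos (by linarith) _
  refine le_of_mul_le_mul_right ?_ hpos
  calc (2 : ℝ) ^ x * (1 + x) ^ (1 - x) ≤ 1 + 2 * x := two_rpow_mul_one_add_rpow_le hx₀.le hx₁.le
    _ ≤ (1 + 2 * x) * ((1 + x) ^ (1 - x) * Gamma (1 + x)) :=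
      le_mul_of_one_le_right (by linarith) (one_le_rpow_mul_Gamma_one_add hx₀ hx₁)
    _ = (1 + 2 * x) * Gamma (1 + x) * (1 + x) ^ (1 - x) := by ring

theorem gamma_lower_bound {p : ℝ} (hp : p ∈ Set.Ioo (0:ℝ) 1) :
    (1 - p) * (2 - p) * Real.Gamma ((1 - p) / 2) ≥ (2:ℝ) ^ ((3 - p) / 2) := by
  obtain ⟨hp₀, hp₁⟩ := hp
  set x := (1 - p) / 2 with hx
  have hx₀ : 0 < x := by linarith
  have hlhs : (1 - p) * (2 - p) * Gamma x = 2 * ((1 + 2 * x) * Gamma (1 + x)) := by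
    rw [add_comm 1 x, Gamma_add_one hx₀.ne', hx]
    ring
  have hrhs : (2 : ℝ) ^ ((3 - p) / 2) = 2 * 2 ^ x := by
    rw [show (3 - p) / 2 = 1 + x by ring, rpow_add two_pos, rpow_one]
  rw [hlhs, hrhs, ge_iff_le]
  gcongr
  exact two_rpow_le_mul_Gamma_one_add hx₀ (by linarith)
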